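/- Let G be a topological group and Δ a continuous right-invariant pseudometric on G such that d(Δ) = Δ♭(Δ) ≥ ℵ₀. Then there exists f ∈ BLip⁺(Δ) whose right orbit { x·f | x ∈ G } is dense in BLip⁺(Δ) in the topology of pointwise convergence; i.e., BLip⁺(Δ) equals the pointwise closure of the orbit of f. -/

import Mathlib

open Cardinal Topology

universe u

/-- `Δ` is a pseudometric: vanishes on the diagonal, symmetric, triangle inequality. -/
def IsPseudometric {G : Type u} (Δ : G → G → ℝ) : Prop :=
  (∀ x, Δ x x = 0) ∧ (∀ x y, Δ x y = Δ y x) ∧ (∀ x y z, Δ x z ≤ Δ x y + Δ y z)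

/-- Right invariance of a pseudometric on a group. -/
def RightInvariant {G : Type u} [Group G] (Δ : G → G → ℝ) : Prop :=
  ∀ z z' x, Δ (z * x) (z' * x) = Δ z z'

/-- `BLip⁺(Δ)`: [0,1]-valued functions that are 1-Lipschitz for `Δ`. -/
def BLip {G : Type u} (Δ : G → G → ℝ) : Set (G → ℝ) :=
  {f | (∀ x, 0 ≤ f x ∧ f x ≤ 1) ∧ ∀ x y, |f x - f y| ≤ Δ x y}

/-- Right translation `(x·f)(z) = f(zx)`. -/
def rtrans {G : Type u} [Group G] (x : G) (f : G → ℝ) : G → ℝ := fun z => f (z * x)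

/-- The right orbit of `f`. -/
def rorbit {G : Type u} [Group G] (f : G → ℝ) : Set (G → ℝ) := {g | ∃ x : G, g = rtrans x f}

/-- A continuous right-invariant pseudometric on a topological group. -/
def IsCRIP {G : Type u} [Group G] [TopologicalSpace G] (Δ : G → G → ℝ) : Prop :=
  IsPseudometric Δ ∧ RightInvariant Δ ∧ Continuous fun p : G × G => Δ p.1 p.2

/-- `d(Δ)`: least cardinality of a `Δ`-dense subset of `G`. -/
noncomputable def dDens {G : Type u} (Δ : G → G → ℝ) : Cardinal.{u} :=
  sInf {c | ∃ H : Set G, (∀ x : G, ∀ ε : ℝ, 0 < ε → ∃ h ∈ H, Δ x h < ε) ∧ c = Cardinal.mk H}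

/-- `η♯(Δ)`: least cardinality of `P ⊆ G` with `G = ⋃_{p ∈ P} {x | Δ(p,x) ≤ 1}`. -/
noncomputable def etaSharp {G : Type u} (Δ : G → G → ℝ) : Cardinal.{u} :=
  sInf {c | ∃ P : Set G, (∀ x : G, ∃ p ∈ P, Δ p x ≤ 1) ∧ c = Cardinal.mk P}

/-- `Δ♭(Δ)`: least cardinality of `P ⊆ G` admitting a finite `Q ⊆ G` with
`G = ⋃_{q ∈ Q} ⋃_{p ∈ P} {x | Δ(p, qx) ≤ 1}`. -/
noncomputable def deltaFlat {G : Type u} [Group G] (Δ : G → G → ℝ) : Cardinal.{u} :=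
  sInf {c | ∃ P : Set G,
    (∃ Q : Set G, Q.Finite ∧ ∀ x : G, ∃ q ∈ Q, ∃ p ∈ P, Δ p (q * x) ≤ 1) ∧
    c = Cardinal.mk P}

/-- Bounded right uniformly continuous real function on a topological group
(the right uniformity being generated by continuous right-invariant pseudometrics). -/
def BddRUC {G : Type u} [Group G] [TopologicalSpace G] (f : G → ℝ) : Prop :=
  (∃ C : ℝ, ∀ x, |f x| ≤ C) ∧
  ∀ ε : ℝ, 0 < ε → ∃ Δ : G → G → ℝ, IsCRIP Δ ∧
    ∃ δ : ℝ, 0 < δ ∧ ∀ x y, Δ x y < δ → |f x - f y| < ε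

/-- `G` is ambitable: every `BLip⁺(Δ)` is contained in the pointwise closure of the
right orbit of some bounded right uniformly continuous function. -/
def Ambitable (G : Type u) [Group G] [TopologicalSpace G] : Prop :=
  ∀ Δ : G → G → ℝ, IsCRIP Δ →
    ∃ f : G → ℝ, BddRUC f ∧ BLip Δ ⊆ closure (rorbit f)

/-- `G` is precompact: every continuous right-invariant pseudometric admits finite
`ε`-dense sets. -/
def PrecompactGrp (G : Type u) [Group G] [TopologicalSpace G] : Prop :=
  ∀ Δ : G → G → ℝ, IsCRIP Δ → ∀ ε : ℝ, 0 < ε →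
    ∃ F : Set G, F.Finite ∧ ∀ x : G, ∃ p ∈ F, Δ x p < ε

/-- `G` is `κ`-bounded: every neighbourhood `U` of the identity admits `H` with
`|H| ≤ κ` and `U * H = G`. -/
def KBounded (G : Type u) [Group G] [TopologicalSpace G] (κ : Cardinal.{u}) : Prop :=
  ∀ U ∈ nhds (1 : G), ∃ H : Set G, Cardinal.mk H ≤ κ ∧
    ∀ x : G, ∃ u ∈ U, ∃ h ∈ H, x = u * h

/-- `G` is locally `κ`-bounded: the identity has a neighbourhood `U` such that for each
continuous right-invariant pseudometric `Δ` there is a `Δ`-dense subset `H` of `U`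
with `|H| ≤ κ`. -/
def LocallyKBounded (G : Type u) [Group G] [TopologicalSpace G] (κ : Cardinal.{u}) : Prop :=
  ∃ U ∈ nhds (1 : G), ∀ Δ : G → G → ℝ, IsCRIP Δ →
    ∃ H : Set G, H ⊆ U ∧ Cardinal.mk H ≤ κ ∧
      ∀ x ∈ U, ∀ ε : ℝ, 0 < ε → ∃ h ∈ H, Δ x h < ε

/-!
Fix a `Δ`-dense set `H` with `|H| = κ = d(Δ)`. A *task* is a finite set of pairs `(h, q)` with
`h ∈ H`, `q ∈ ℚ`, `q ≤ 1`; there are at most `κ` tasks. Fewer than `κ = Δ♭(Δ)` points never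
satisfy the covering condition in the definition of `Δ♭`, so a transfinite recursion along `κ`
chooses for every task `t` a translate `x_t` such that the translated point sets of different
tasks are more than `1` apart. The supremum `f` of all the tents `q - Δ(·, h x_t)` then agrees on
the points of `t` with the least element of `BLip⁺(Δ)` lying above the values of `t`, and these
least elements approximate every member of `BLip⁺(Δ)` on finite sets.
-/

open Set Filter

lemma IsPseudometric.nonneg {G : Type*} {Δ : G → G → ℝ} (hΔ : IsPseudometric Δ) (x y : G) :
    0 ≤ Δ x y := by
  obtain ⟨h0, hsymm, htri⟩ := hΔ
  linarith [htri x y x, h0 x, hsymm y x]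

theorem WellFounded.exists_fun_of_forall_exists {ι α : Type*} {r : ι → ι → Prop}
    (hr : WellFounded r) {Q : ι → α → ι → α → Prop}
    (step : ∀ i (prev : ∀ j, r j i → α), ∃ a, ∀ j (h : r j i), Q i a j (prev j h)) :
    ∃ x : ι → α, ∀ i j, r j i → Q i (x i) j (x j) := by
  choose next hnext using step
  refine ⟨hr.fix next, fun i j hji => ?_⟩
  rw [hr.fix_eq next i]
  exact hnext i _ j hji

theorem Cardinal.mk_iUnion_lt_of_finite {α ι : Type u} {s : ι → Set α} {κ : Cardinal.{u}}
    (hκ : ℵ₀ ≤ κ) (hι : #ι < κ) (hs : ∀ i, (s i).Finite) : #(⋃ i, s i) < κ := by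
  rcases finite_or_infinite ι with hfin | hinf
  · exact (finite_iUnion hs).lt_aleph0.trans_le hκ
  · calc #(⋃ i, s i) ≤ #ι * ⨆ i, #(s i) := mk_iUnion_le s
      _ ≤ #ι * ℵ₀ := by gcongr; exact ciSup_le' fun i => (hs i).lt_aleph0.le
      _ = #ι := mul_aleph0_eq (aleph0_le_mk ι)
      _ < κ := hι

theorem Cardinal.mk_setOf_finset_subset_le {α : Type u} (S : Set α) :
    #{t : Finset α | ↑t ⊆ S} ≤ max ℵ₀ #S := by
  classical
  have hrange :
      {t : Finset α | ↑t ⊆ S} ⊆ range (Finset.map (Function.Embedding.subtype (· ∈ S))) :=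
    fun t ht => ⟨t.subtype (· ∈ S), Finset.subtype_map_of_mem ht⟩
  calc #{t : Finset α | ↑t ⊆ S} ≤ #(Finset S) := (mk_le_mk_of_subset hrange).trans mk_range_le
    _ ≤ #(List S) := mk_le_of_surjective List.toFinset_surjective
    _ ≤ max ℵ₀ #S := mk_list_le_max S

theorem mem_closure_of_forall_finset_exists_dist_lt {X Y : Type*} [PseudoMetricSpace Y]
    {S : Set (X → Y)} {g : X → Y}
    (h : ∀ (I : Finset X) (ε : ℝ), 0 < ε → ∃ f ∈ S, ∀ z ∈ I, dist (f z) (g z) < ε) :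
    g ∈ closure S := by
  have hbasis : (𝓝 g).HasBasis (fun Ir : Set X × (X → ℝ) => Ir.1.Finite ∧ ∀ z ∈ Ir.1, 0 < Ir.2 z)
      fun Ir => Ir.1.pi fun z => Metric.ball (g z) (Ir.2 z) := by
    rw [nhds_pi]
    exact hasBasis_pi fun z => Metric.nhds_basis_ball (x := g z)
  rw [mem_closure_iff_nhds_basis hbasis]
  rintro ⟨I, r⟩ ⟨hI, hr⟩
  obtain ⟨ε, hεr, hε⟩ : ∃ ε, (∀ z ∈ I, ε ≤ r z) ∧ 0 < ε :=
    (((hI.eventually_all).2 fun z hz => (eventually_le_nhds (hr z hz)).filter_mono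
      nhdsWithin_le_nhds).and self_mem_nhdsWithin).exists (f := 𝓝[>] (0 : ℝ))
  obtain ⟨f, hfS, hf⟩ := h hI.toFinset ε hε
  exact ⟨f, hfS, fun z hz => (hf z (hI.mem_toFinset.2 hz)).trans_le (hεr z hz)⟩

section BLip

variable {G : Type*} {Δ : G → G → ℝ}

theorem isClosed_BLip (Δ : G → G → ℝ) : IsClosed (BLip Δ) := by
  simp only [BLip, ofPred_and, ofPred_forall]
  exact (isClosed_iInter fun x => (isClosed_le continuous_const (continuous_apply x)).inter
      (isClosed_le (continuous_apply x) continuous_const)).inter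
    (isClosed_iInter fun x => isClosed_iInter fun y => isClosed_le (by fun_prop) continuous_const)

theorem rtrans_mem_BLip [Group G] (hinv : RightInvariant Δ) {f : G → ℝ} (hf : f ∈ BLip Δ)
    (x : G) : rtrans x f ∈ BLip Δ :=
  ⟨fun z => hf.1 (z * x), fun z y => (hf.2 (z * x) (y * x)).trans_eq (hinv z y x)⟩

theorem closure_rorbit_subset_BLip [Group G] (hinv : RightInvariant Δ)
    {f : G → ℝ} (hf : f ∈ BLip Δ) : closure (rorbit f) ⊆ BLip Δ :=
  closure_minimal (by rintro _ ⟨x, rfl⟩; exact rtrans_mem_BLip hinv hf x) (isClosed_BLip Δ)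

end BLip

/-- The supremum of `0` and of the tents `p.2 - Δ y p.1`, `p ∈ P`: the least element of
`BLip Δ` that lies above the value `p.2` at `p.1` for every `p ∈ P` (when these values are
`≤ 1`). -/
noncomputable def tentSup {G : Type*} (Δ : G → G → ℝ) (P : Set (G × ℝ)) (y : G) : ℝ :=
  sSup (insert 0 ((fun p => p.2 - Δ y p.1) '' P))

section tentSup

variable {G : Type*} {Δ : G → G → ℝ} {P : Set (G × ℝ)}

theorem tentSup_le {y : G} {c : ℝ} (hc : 0 ≤ c) (h : ∀ p ∈ P, p.2 - Δ y p.1 ≤ c) :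
    tentSup Δ P y ≤ c :=
  csSup_le (insert_nonempty _ _) (by rintro _ (rfl | ⟨p, hp, rfl⟩); exacts [hc, h p hp])

theorem bddAbove_tents (hΔ : IsPseudometric Δ) (hP : ∀ p ∈ P, p.2 ≤ 1) (y : G) :
    BddAbove (insert 0 ((fun p => p.2 - Δ y p.1) '' P)) := by
  refine ⟨1, ?_⟩
  rintro _ (rfl | ⟨p, hp, rfl⟩)
  · exact zero_le_one
  · linarith [hP p hp, hΔ.nonneg y p.1]

theorem tentSup_nonneg (hΔ : IsPseudometric Δ) (hP : ∀ p ∈ P, p.2 ≤ 1) (y : G) :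
    0 ≤ tentSup Δ P y :=
  le_csSup (bddAbove_tents hΔ hP y) (mem_insert _ _)

theorem sub_le_tentSup (hΔ : IsPseudometric Δ) (hP : ∀ p ∈ P, p.2 ≤ 1) {p : G × ℝ} (hp : p ∈ P)
    (y : G) : p.2 - Δ y p.1 ≤ tentSup Δ P y :=
  le_csSup (bddAbove_tents hΔ hP y) (mem_insert_of_mem _ (mem_image_of_mem _ hp))

theorem le_tentSup_self (hΔ : IsPseudometric Δ) (hP : ∀ p ∈ P, p.2 ≤ 1) {p : G × ℝ}
    (hp : p ∈ P) : p.2 ≤ tentSup Δ P p.1 := by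
  simpa [hΔ.1 p.1] using sub_le_tentSup hΔ hP hp p.1

theorem tentSup_le_of_mem_BLip {g : G → ℝ} (hg : g ∈ BLip Δ) (hP : ∀ p ∈ P, p.2 ≤ g p.1)
    (y : G) : tentSup Δ P y ≤ g y :=
  tentSup_le (hg.1 y).1 fun p hp => by
    linarith [hP p hp, le_abs_self (g p.1 - g y), abs_sub_comm (g p.1) (g y), hg.2 y p.1]

theorem tentSup_mem_BLip (hΔ : IsPseudometric Δ) (hP : ∀ p ∈ P, p.2 ≤ 1) :
    tentSup Δ P ∈ BLip Δ := by
  have hlip : ∀ y y', tentSup Δ P y ≤ tentSup Δ P y' + Δ y y' := fun y y' =>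
    tentSup_le (add_nonneg (tentSup_nonneg hΔ hP y') (hΔ.nonneg y y')) fun p hp => by
      linarith [sub_le_tentSup hΔ hP hp y', hΔ.2.2 y' y p.1, hΔ.2.1 y' y]
  refine ⟨fun y => ⟨tentSup_nonneg hΔ hP y, tentSup_le zero_le_one fun p hp => ?_⟩,
    fun y y' => abs_sub_le_iff.2 ⟨by linarith [hlip y y'], by linarith [hlip y' y, hΔ.2.1 y y']⟩⟩
  linarith [hP p hp, hΔ.nonneg y p.1]

end tentSup

section Construction

variable {G : Type u} [Group G] {Δ : G → G → ℝ}

theorem exists_translate_far {S : Set G} (hS : #S < deltaFlat Δ) (F : Finset G) :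
    ∃ x : G, ∀ z ∈ F, ∀ s ∈ S, 1 < Δ s (z * x) := by
  by_contra! h
  have hle : deltaFlat Δ ≤ #S := csInf_le' ⟨S, ⟨F, F.finite_toSet, h⟩, rfl⟩
  exact hle.not_gt hS

theorem exists_separated_translates (hsymm : ∀ x y, Δ x y = Δ y x) {κ : Cardinal.{u}}
    (hκ : ℵ₀ ≤ κ) (hflat : κ ≤ deltaFlat Δ) {ι : Type u} (hι : #ι ≤ κ) (F : ι → Finset G) :
    ∃ x : ι → G, Pairwise fun i j => ∀ z ∈ F i, ∀ z' ∈ F j, 1 < Δ (z * x i) (z' * x j) := by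
  -- recursion along `κ.ord`, whose initial segments all have fewer than `κ` elements
  obtain ⟨e⟩ : Nonempty (ι ↪ κ.ord.ToType) := by
    rwa [← Cardinal.le_def, mk_ord_toType]
  have hr : WellFounded (InvImage (· < ·) e) := InvImage.wf _ wellFounded_lt
  obtain ⟨x, hx⟩ := hr.exists_fun_of_forall_exists
    (Q := fun i a j b => ∀ z ∈ F j, ∀ z' ∈ F i, 1 < Δ (z * b) (z' * a)) fun i prev => by
      have hS : #(⋃ j : e ⁻¹' Iio (e i), (· * prev j j.2) '' ↑(F j)) < deltaFlat Δ :=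
        (mk_iUnion_lt_of_finite hκ ((mk_preimage_of_injective _ _ e.injective).trans_lt
          (by simpa using mk_Iio_lt (e i))) fun j => (F j).finite_toSet.image _).trans_le hflat
      obtain ⟨a, ha⟩ := exists_translate_far hS (F i)
      exact ⟨a, fun j hj z hz z' hz' =>
        ha z' hz' _ (mem_iUnion_of_mem ⟨j, hj⟩ (mem_image_of_mem _ hz))⟩
  refine ⟨x, fun i j hij => ?_⟩
  rcases lt_or_gt_of_ne (e.injective.ne hij) with h | h
  · exact hx j i h
  · intro z hz z' hz'
    rw [hsymm]
    exact hx i j h z' hz' z hz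

theorem exists_mem_BLip_forall_exists_eqOn_tentSup (hΔ : IsPseudometric Δ)
    (hinv : RightInvariant Δ) {κ : Cardinal.{u}} (hκ : ℵ₀ ≤ κ) (hflat : κ ≤ deltaFlat Δ)
    {𝒯 : Set (Finset (G × ℝ))} (h𝒯 : #𝒯 ≤ κ) (hval : ∀ t ∈ 𝒯, ∀ p ∈ t, p.2 ≤ 1) :
    ∃ f ∈ BLip Δ, ∀ t ∈ 𝒯, ∃ x,
      EqOn (rtrans x f) (tentSup Δ (t : Set (G × ℝ))) (Prod.fst '' (t : Set (G × ℝ))) := by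
  classical
  obtain ⟨x, hx⟩ := exists_separated_translates hΔ.2.1 hκ hflat h𝒯 fun t => t.1.image Prod.fst
  set Q : Set (G × ℝ) := ⋃ t : 𝒯, (fun p : G × ℝ => (p.1 * x t, p.2)) '' (t.1 : Set (G × ℝ))
  have hQ : ∀ q ∈ Q, q.2 ≤ 1 := by
    simp only [Q, mem_iUnion, mem_image]
    rintro _ ⟨t, p, hp, rfl⟩
    exact hval t t.2 p hp
  refine ⟨tentSup Δ Q, tentSup_mem_BLip hΔ hQ, fun t ht => ⟨x ⟨t, ht⟩, ?_⟩⟩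
  have ht1 : ∀ p ∈ (t : Set (G × ℝ)), p.2 ≤ 1 := hval t ht
  rintro _ ⟨p, hp, rfl⟩
  refine le_antisymm (tentSup_le (tentSup_nonneg hΔ ht1 _) ?_)
    (tentSup_le (tentSup_nonneg hΔ hQ _) fun p' hp' => ?_)
  · simp only [Q, mem_iUnion, mem_image]
    rintro _ ⟨s, p', hp', rfl⟩
    by_cases hst : s = ⟨t, ht⟩
    · subst hst
      rw [hinv]
      exact sub_le_tentSup hΔ ht1 hp' _
    · have hfar := hx (Ne.symm hst) p.1 (Finset.mem_image_of_mem _ hp) p'.1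
        (Finset.mem_image_of_mem _ hp')
      linarith [hval s s.2 p' hp', tentSup_nonneg hΔ ht1 p.1]
  · rw [← hinv p.1 p'.1 (x ⟨t, ht⟩)]
    exact sub_le_tentSup hΔ hQ (mem_iUnion_of_mem ⟨t, ht⟩ (mem_image_of_mem _ hp')) _

end Construction

theorem exists_dense_mk_eq_dDens {G : Type u} {Δ : G → G → ℝ} (h0 : ∀ x, Δ x x = 0) :
    ∃ H : Set G, (∀ x : G, ∀ ε : ℝ, 0 < ε → ∃ h ∈ H, Δ x h < ε) ∧ #H = dDens Δ := by
  obtain ⟨H, hH, hcard⟩ := csInf_mem (s := {c | ∃ H : Set G,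
      (∀ x : G, ∀ ε : ℝ, 0 < ε → ∃ h ∈ H, Δ x h < ε) ∧ c = #H})
    ⟨_, univ, fun x ε hε => ⟨x, mem_univ x, by rwa [h0]⟩, rfl⟩
  exact ⟨H, hH, hcard.symm⟩

theorem exists_finset_forall_dist_lt {G : Type*} {Δ : G → G → ℝ} (hΔ : IsPseudometric Δ)
    {H : Set G} (hH : ∀ x : G, ∀ ε : ℝ, 0 < ε → ∃ h ∈ H, Δ x h < ε) {D : Set ℝ} (hD : Dense D)
    {g : G → ℝ} (hg : g ∈ BLip Δ) (I : Finset G) {ε : ℝ} (hε : 0 < ε) :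
    ∃ t : Finset (G × ℝ), ↑t ⊆ H ×ˢ (D ∩ Iic 1) ∧ ∀ h ∈ BLip Δ,
      EqOn h (tentSup Δ (t : Set (G × ℝ))) (Prod.fst '' (t : Set (G × ℝ))) →
        ∀ z ∈ I, dist (h z) (g z) < ε := by
  classical
  have hε3 : 0 < ε / 3 := by positivity
  choose w hwH hw using fun z => hH z (ε / 3) hε3
  choose q hqD hq using fun z => hD.exists_between (sub_lt_self (g (w z)) hε3)
  set t := I.image fun z => (w z, q z)
  have hbelow : ∀ p ∈ (t : Set (G × ℝ)), p.2 ≤ g p.1 := by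
    simp only [t, Finset.coe_image, forall_mem_image]
    exact fun z _ => (hq z).2.le
  have hval : ∀ p ∈ (t : Set (G × ℝ)), p.2 ≤ 1 := fun p hp => (hbelow p hp).trans (hg.1 _).2
  refine ⟨t, fun p hp => ?_, fun h hh hEq z hz => ?_⟩
  · obtain ⟨z, -, rfl⟩ := Finset.mem_image.1 hp
    exact ⟨hwH z, hqD z, hval _ hp⟩
  have hmem : (w z, q z) ∈ (t : Set (G × ℝ)) := Finset.mem_image_of_mem _ hz
  have hlow : q z ≤ h (w z) := (hEq ⟨_, hmem, rfl⟩).symm ▸ le_tentSup_self hΔ hval hmem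
  have hup : h (w z) ≤ g (w z) := (hEq ⟨_, hmem, rfl⟩) ▸ tentSup_le_of_mem_BLip hg hbelow _
  have hhz := abs_le.1 (hh.2 z (w z))
  have hgz := abs_le.1 (hg.2 z (w z))
  rw [Real.dist_eq, abs_lt]
  constructor <;> linarith [hw z, (hq z).1]

theorem BLip_eq_orbit_closure_general {G : Type u} [Group G] [TopologicalSpace G]
    (Δ : G → G → ℝ) (hΔ : IsCRIP Δ)
    (heq : dDens Δ = deltaFlat Δ) (hbig : Cardinal.aleph0 ≤ dDens Δ) :
    ∃ f ∈ BLip Δ, BLip Δ = closure (rorbit f) := by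
  obtain ⟨hpm, hinv, -⟩ := hΔ
  obtain ⟨H, hH, hHcard⟩ := exists_dense_mk_eq_dDens hpm.1
  set 𝒯 : Set (Finset (G × ℝ)) := {t | ↑t ⊆ H ×ˢ (range ((↑) : ℚ → ℝ) ∩ Iic 1)}
  have h𝒯 : #𝒯 ≤ dDens Δ := by
    refine (mk_setOf_finset_subset_le _).trans (max_le hbig ?_)
    rw [mk_congr (Equiv.Set.prod _ _), mk_prod, lift_uzero, hHcard]
    have hcount : #(range ((↑) : ℚ → ℝ) ∩ Iic 1 : Set ℝ) ≤ ℵ₀ :=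
      ((countable_range _).mono inter_subset_left).le_aleph0
    exact (mul_le_mul_right ((lift_le_aleph0.2 hcount).trans hbig) _).trans (mul_eq_self hbig).le
  obtain ⟨f, hf, hf𝒯⟩ := exists_mem_BLip_forall_exists_eqOn_tentSup hpm hinv hbig heq.le h𝒯
    fun t ht p hp => (ht hp).2.2
  refine ⟨f, hf, Subset.antisymm (fun g hg => ?_) (closure_rorbit_subset_BLip hinv hf)⟩
  refine mem_closure_of_forall_finset_exists_dist_lt fun I ε hε => ?_
  obtain ⟨t, ht, happrox⟩ := exists_finset_forall_dist_lt hpm hH Rat.denseRange_cast hg I hε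
  obtain ⟨x, hx⟩ := hf𝒯 t ht
  exact ⟨rtrans x f, ⟨x, rfl⟩, happrox _ (rtrans_mem_BLip hinv hf x) hx⟩

/-- if `d(Δ) = Δ♭(Δ) ≥ ℵ₀` then `BLip⁺(Δ)` is the pointwise closure of
the right orbit of one of its elements. -/
theorem BLip_eq_orbit_closure {G : Type u} [Group G] [TopologicalSpace G]
    [IsTopologicalGroup G] (Δ : G → G → ℝ) (hΔ : IsCRIP Δ)
    (heq : dDens Δ = deltaFlat Δ) (hbig : Cardinal.aleph0 ≤ dDens Δ) :
    ∃ f ∈ BLip Δ, BLip Δ = closure (rorbit f) :=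
  BLip_eq_orbit_closure_general Δ hΔ heq hbig
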